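/- arXiv:2206.06042 — 3 statements merged into one kernel-verified Lean document; each statement's English description precedes it below -/
import Mathlib

section
/- (a) Let (K, σ) be a 1-algebraically closed σ-field. Then every nonzero skew polynomial P(T) ∈ K[T;σ] splits completely: there exist a nonzero a ∈ K, nonzero elements a_1, …, a_n ∈ K, and m ≥ 0 such that P(T) = a·(T−a_n)⋯(T−a_2)(T−a_1)·T^m. (b) If moreover (K, σ) is ℵ_0-algebraically closed, then every nonzero P(T) ∈ K[T;σ] can be written as P(T) = a·(T−a_n)⋯(T−a_2)(T−a_1)·T^m where a ∈ K is nonzero, a_1, …, a_n ∈ K are distinct nonzero elements, and m ≥ 0. -/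
open Polynomial

variable {K : Type*} [Field K]

/-- `skewN σ i a = σ^{i-1}(a)⋯σ(a)·a`, with `skewN σ 0 a = 1`. -/
def skewN (σ : K →+* K) : ℕ → K → K
  | 0, _ => 1
  | i + 1, a => σ (skewN σ i a) * a

/-- Right evaluation of a skew polynomial `P = Σ aᵢ Tⁱ` at `a`: `P(a) = Σ aᵢ Nᵢ(a)`. -/
noncomputable def skewEval (σ : K →+* K) (P : Polynomial K) (a : K) : K :=
  ∑ i ∈ P.support, P.coeff i * skewN σ i a

/-- Multiplication in the skew polynomial ring `K[T;σ]` (with `T·a = σ(a)·T`),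
using `Polynomial K` as the carrier of coefficient sequences. -/
noncomputable def skewMul (σ : K →+* K) (P Q : Polynomial K) : Polynomial K :=
  ∑ i ∈ P.support, ∑ j ∈ Q.support,
    Polynomial.C (P.coeff i * (⇑σ)^[i] (Q.coeff j)) * Polynomial.X ^ (i + j)

universe u

/-- `(K, σ)` is 1-algebraically closed: every nonconstant skew polynomial has a right root. -/
def OneAlgClosed {K : Type*} [Field K] (σ : K →+* K) : Prop :=
  ∀ P : Polynomial K, 0 < P.natDegree → ∃ a : K, skewEval σ P a = 0

/-- `(K, σ)` is `c`-algebraically closed: every skew polynomial of degree `> 1` with nonzero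
constant term has at least `c` distinct right roots. -/
def CAlgClosed {K : Type u} [Field K] (σ : K →+* K) (c : Cardinal.{u}) : Prop :=
  ∀ P : Polynomial K, 1 < P.natDegree → P.coeff 0 ≠ 0 →
    c ≤ Cardinal.mk {x : K // skewEval σ P x = 0}

/-- The product `a·(T−aₙ)⋯(T−a₂)(T−a₁)·Tᵐ` in `K[T;σ]`. -/
noncomputable def skewLinearProd {K : Type*} [Field K] (σ : K →+* K) (a : K) {n : ℕ}
    (r : Fin n → K) (m : ℕ) : Polynomial K :=
  skewMul σ (Polynomial.C a)
    ((List.ofFn r).foldr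
      (fun t acc => skewMul σ (Polynomial.X - Polynomial.C t) acc) (Polynomial.X ^ m))

/-!
Right division by `T − c` in `K[T;σ]` leaves the remainder `P(c)`, so each right root `c` splits
off a factor `T − c` on the right and lowers the degree by one. After removing the power of `T`,
a 1-algebraically closed field thus splits every nonzero skew polynomial, and the roots are
nonzero because the constant term `a·∏(−aᵢ)` is. For distinct roots, ℵ₀-closedness lets each
root be chosen outside the finitely many used so far as long as the degree is at least 2; at
degree 2 the last root `d` is forced by `d·c = P(0)/lc(P)`, so `c` must also avoid the finitely
many values for which that `d` collides.
-/

theorem Polynomial.exists_eq_mul_X_pow_of_ne_zero {R : Type*} [CommRing R] {P : R[X]}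
    (hP : P ≠ 0) : ∃ m Q, Q.coeff 0 ≠ 0 ∧ P = Q * X ^ m := by
  obtain ⟨Q, hPQ, hQ⟩ := exists_eq_pow_rootMultiplicity_mul_and_not_dvd P hP 0
  rw [map_zero, sub_zero, X_dvd_iff] at hQ
  exact ⟨_, Q, hQ, by rw [hPQ, mul_comm, map_zero, sub_zero]⟩

section SkewMul

open Finset

variable (σ : K →+* K)

theorem coeff_skewMul (P Q : K[X]) (n : ℕ) :
    (skewMul σ P Q).coeff n =
      ∑ x ∈ antidiagonal n, P.coeff x.1 * (⇑σ)^[x.1] (Q.coeff x.2) := by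
  classical
  simp only [skewMul, finsetSum_coeff, coeff_C_mul_X_pow, ← sum_product', ← sum_filter]
  refine sum_subset (fun x hx => ?_) (fun x _ hx => ?_)
  · simp_all [eq_comm]
  · by_cases h : P.coeff x.1 = 0 <;> simp_all

theorem skewMul_add_left (A B D : K[X]) :
    skewMul σ (A + B) D = skewMul σ A D + skewMul σ B D := by
  ext n; simp [coeff_skewMul, add_mul, sum_add_distrib]

theorem skewMul_sub_left (A B D : K[X]) :
    skewMul σ (A - B) D = skewMul σ A D - skewMul σ B D := by
  ext n; simp [coeff_skewMul, sub_mul, sum_sub_distrib]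

theorem skewMul_sub_right (A B D : K[X]) :
    skewMul σ A (B - D) = skewMul σ A B - skewMul σ A D := by
  ext n; simp [coeff_skewMul, iterate_map_sub, mul_sub, sum_sub_distrib]

theorem skewMul_zero_left (B : K[X]) : skewMul σ 0 B = 0 := by
  ext n; simp [coeff_skewMul]

theorem skewMul_C_mul_left (a : K) (A B : K[X]) :
    skewMul σ (C a * A) B = C a * skewMul σ A B := by
  ext n; simp [coeff_skewMul, mul_sum, mul_assoc]

theorem skewMul_C_left (a : K) (B : K[X]) : skewMul σ (C a) B = C a * B := by
  ext n
  rw [coeff_skewMul, coeff_mul]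
  refine sum_congr rfl fun x _ => ?_
  rcases eq_or_ne x.1 0 with h | h <;> simp [coeff_C, h]

theorem skewMul_eq_mul_of_map_eq (A : K[X]) {B : K[X]} (hB : B.map σ = B) :
    skewMul σ A B = A * B := by
  ext n
  rw [coeff_skewMul, coeff_mul]
  refine sum_congr rfl fun x _ => ?_
  rw [Function.iterate_fixed (by rw [← coeff_map, hB])]

theorem skewMul_mul_X_left (A B : K[X]) :
    skewMul σ (A * X) B = skewMul σ A (B.map σ) * X := by
  ext n
  cases n with
  | zero => simp [coeff_skewMul]
  | succ n =>
    rw [coeff_mul_X, coeff_skewMul, coeff_skewMul, Nat.sum_antidiagonal_succ]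
    simp [coeff_map, Function.iterate_succ_apply]

theorem map_skewMul (A B : K[X]) :
    (skewMul σ A B).map σ = skewMul σ (A.map σ) (B.map σ) := by
  ext n
  simp [coeff_skewMul, coeff_map, ← Function.iterate_succ_apply' σ, Function.iterate_succ_apply]

theorem coeff_skewMul_C_right (A : K[X]) (c : K) (n : ℕ) :
    (skewMul σ A (C c)).coeff n = A.coeff n * (⇑σ)^[n] c := by
  rw [coeff_skewMul, sum_eq_single_of_mem (n, 0) (by simp)]
  · simp
  · rintro ⟨i, j⟩ hx hne
    have : j ≠ 0 := by rintro rfl; simp_all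
    simp [coeff_C, this]

theorem skewMul_one_left (B : K[X]) : skewMul σ 1 B = B := by
  simpa using skewMul_C_left σ 1 B

theorem skewMul_X_sub_C_left (t : K) (A : K[X]) :
    skewMul σ (X - C t) A = A.map σ * X - C t * A := by
  have hX : skewMul σ X A = A.map σ * X := by
    simpa [skewMul_one_left] using skewMul_mul_X_left σ 1 A
  rw [skewMul_sub_left, hX, skewMul_C_left]

theorem skewMul_X_sub_C_assoc (t : K) (A B : K[X]) :
    skewMul σ (skewMul σ (X - C t) A) B = skewMul σ (X - C t) (skewMul σ A B) := by
  rw [skewMul_X_sub_C_left, skewMul_X_sub_C_left, skewMul_sub_left, skewMul_mul_X_left,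
    skewMul_C_mul_left, map_skewMul]

theorem skewMul_X_sub_C_right (A : K[X]) (c : K) :
    skewMul σ A (X - C c) = A * X - skewMul σ A (C c) := by
  rw [skewMul_sub_right, skewMul_eq_mul_of_map_eq σ A (map_X σ)]

theorem natDegree_skewMul_C_right_le (A : K[X]) (c : K) :
    (skewMul σ A (C c)).natDegree ≤ A.natDegree :=
  natDegree_le_iff_coeff_eq_zero.2 fun n hn => by
    rw [coeff_skewMul_C_right, coeff_eq_zero_of_natDegree_lt hn, zero_mul]

theorem natDegree_skewMul_X_sub_C {A : K[X]} (hA : A ≠ 0) (c : K) :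
    (skewMul σ A (X - C c)).natDegree = A.natDegree + 1 := by
  rw [skewMul_X_sub_C_right, natDegree_sub_eq_left_of_natDegree_lt, natDegree_mul_X hA]
  rw [natDegree_mul_X hA]
  exact Nat.lt_succ_of_le (natDegree_skewMul_C_right_le σ A c)

theorem leadingCoeff_skewMul_X_sub_C {A : K[X]} (hA : A ≠ 0) (c : K) :
    (skewMul σ A (X - C c)).leadingCoeff = A.leadingCoeff := by
  rw [skewMul_X_sub_C_right, leadingCoeff_sub_of_degree_lt, leadingCoeff_mul_X]
  refine degree_lt_degree ?_
  rw [natDegree_mul_X hA]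
  exact Nat.lt_succ_of_le (natDegree_skewMul_C_right_le σ A c)

theorem coeff_zero_skewMul_X_sub_C (A : K[X]) (c : K) :
    (skewMul σ A (X - C c)).coeff 0 = -(A.coeff 0 * c) := by
  simp [skewMul_X_sub_C_right, coeff_skewMul_C_right]

theorem skewMul_monomial_X_sub_C (n : ℕ) (b c : K) :
    skewMul σ (monomial n b) (X - C c) = monomial (n + 1) b - monomial n (b * (⇑σ)^[n] c) := by
  rw [skewMul_X_sub_C_right, monomial_mul_X]
  congr 1
  ext k
  rw [coeff_skewMul_C_right, coeff_monomial, coeff_monomial]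
  split_ifs with h <;> simp [h]

end SkewMul

section SkewLinearFactors

variable (σ : K →+* K)

/-- `skewLinearFactors σ [tₙ, …, t₁] = (T − tₙ)⋯(T − t₁)` in `K[T;σ]`. -/
noncomputable def skewLinearFactors (l : List K) : K[X] :=
  l.foldr (fun t acc => skewMul σ (X - C t) acc) 1

theorem skewLinearFactors_nil : skewLinearFactors σ [] = 1 := rfl

theorem foldr_skewMul_X_sub_C (l : List K) (B : K[X]) :
    l.foldr (fun t acc => skewMul σ (X - C t) acc) B = skewMul σ (skewLinearFactors σ l) B := by
  induction l with
  | nil => simp [skewLinearFactors, skewMul_one_left]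
  | cons t l ih => simp only [skewLinearFactors, List.foldr_cons, ih, skewMul_X_sub_C_assoc]

theorem skewLinearFactors_singleton (t : K) : skewLinearFactors σ [t] = X - C t := by
  simp [skewLinearFactors, skewMul_eq_mul_of_map_eq]

theorem skewLinearFactors_append_singleton (l : List K) (c : K) :
    skewLinearFactors σ (l ++ [c]) = skewMul σ (skewLinearFactors σ l) (X - C c) := by
  rw [skewLinearFactors, List.foldr_append, ← skewLinearFactors, skewLinearFactors_singleton,
    foldr_skewMul_X_sub_C]

theorem coeff_zero_skewLinearFactors (l : List K) :
    (skewLinearFactors σ l).coeff 0 = (l.map Neg.neg).prod := by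
  induction l with
  | nil => simp [skewLinearFactors]
  | cons t l ih =>
    rw [skewLinearFactors, List.foldr_cons, ← skewLinearFactors, skewMul_X_sub_C_left]
    simp [ih]

theorem skewMul_C_mul_skewLinearFactors_X_sub_C (a : K) (l : List K) (c : K) :
    skewMul σ (C a * skewLinearFactors σ l) (X - C c) = C a * skewLinearFactors σ (l ++ [c]) := by
  rw [skewMul_C_mul_left, skewLinearFactors_append_singleton]

theorem skewLinearProd_eq {n : ℕ} (a : K) (r : Fin n → K) (m : ℕ) :
    skewLinearProd σ a r m = C a * skewLinearFactors σ (List.ofFn r) * X ^ m := by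
  rw [skewLinearProd, skewMul_C_left, foldr_skewMul_X_sub_C,
    skewMul_eq_mul_of_map_eq σ _ (by simp), mul_assoc]

end SkewLinearFactors

section SkewEval

variable (σ : K →+* K)

theorem skewN_succ_eq_iterate_mul (i : ℕ) (a : K) :
    skewN σ (i + 1) a = (⇑σ)^[i] a * skewN σ i a := by
  induction i with
  | zero => simp [skewN]
  | succ i ih =>
    calc skewN σ (i + 2) a = σ (skewN σ (i + 1) a) * a := rfl
      _ = (⇑σ)^[i + 1] a * (σ (skewN σ i a) * a) := by
        rw [ih, map_mul, Function.iterate_succ_apply', mul_assoc]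

theorem skewEval_add (P Q : K[X]) (c : K) :
    skewEval σ (P + Q) c = skewEval σ P c + skewEval σ Q c :=
  sum_add_index P Q (fun i a => a * skewN σ i c) (fun _ => zero_mul _) fun _ _ _ => add_mul _ _ _

theorem skewEval_monomial (n : ℕ) (b c : K) :
    skewEval σ (monomial n b) c = b * skewN σ n c :=
  sum_monomial_index b (fun i a => a * skewN σ i c) (zero_mul _)

theorem skewEval_C (b c : K) : skewEval σ (C b) c = b := by
  simp [← monomial_zero_left, skewEval_monomial, skewN]

theorem exists_eq_skewMul_X_sub_C_add_C (Q : K[X]) (c : K) :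
    ∃ Q₁, Q = skewMul σ Q₁ (X - C c) + C (skewEval σ Q c) := by
  induction Q using Polynomial.induction_on' with
  | add P Q hP hQ =>
    obtain ⟨P₁, hP⟩ := hP
    obtain ⟨Q₁, hQ⟩ := hQ
    refine ⟨P₁ + Q₁, ?_⟩
    rw [skewMul_add_left, skewEval_add, C_add]
    linear_combination hP + hQ
  | monomial n b =>
    induction n generalizing b with
    | zero => exact ⟨0, by simp [skewMul_zero_left, skewEval_C]⟩
    | succ n ih =>
      obtain ⟨Q₁, hQ₁⟩ := ih (b * (⇑σ)^[n] c)
      refine ⟨monomial n b + Q₁, ?_⟩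
      rw [skewMul_add_left, skewMul_monomial_X_sub_C, skewEval_monomial,
        skewN_succ_eq_iterate_mul, ← mul_assoc, ← skewEval_monomial]
      linear_combination hQ₁

theorem exists_eq_skewMul_X_sub_C {Q : K[X]} {c : K} (hc : skewEval σ Q c = 0) :
    ∃ Q₁, Q = skewMul σ Q₁ (X - C c) := by
  simpa [hc] using exists_eq_skewMul_X_sub_C_add_C σ Q c

end SkewEval

section Factorization

variable {σ : K →+* K}

theorem eq_C_mul_skewLinearFactors_nil {Q : K[X]} (hQ : Q.natDegree = 0) :
    Q = C (Q.coeff 0) * skewLinearFactors σ [] := by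
  rw [skewLinearFactors_nil, mul_one]
  exact eq_C_of_natDegree_eq_zero hQ

theorem eq_C_mul_skewLinearFactors_singleton {Q : K[X]} (hQ : Q.natDegree = 1) :
    Q = C Q.leadingCoeff * skewLinearFactors σ [-(Q.coeff 0 / Q.leadingCoeff)] := by
  have hl : Q.leadingCoeff ≠ 0 := leadingCoeff_ne_zero.2 fun h => by simp [h] at hQ
  rw [skewLinearFactors_singleton, map_neg, sub_neg_eq_add, mul_add, ← C_mul,
    mul_div_cancel₀ _ hl]
  conv_lhs => rw [eq_X_add_C_of_natDegree_le_one hQ.le]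
  rw [leadingCoeff, hQ]

theorem exists_eq_C_mul_skewLinearFactors (hσ : OneAlgClosed σ) {Q : K[X]} (hQ : Q ≠ 0) :
    ∃ a l, Q = C a * skewLinearFactors σ l := by
  induction hn : Q.natDegree generalizing Q with
  | zero => exact ⟨_, _, eq_C_mul_skewLinearFactors_nil hn⟩
  | succ n ih =>
    obtain ⟨c, hc⟩ := hσ Q (by omega)
    obtain ⟨Q₁, rfl⟩ := exists_eq_skewMul_X_sub_C σ hc
    have hQ₁ : Q₁ ≠ 0 := by rintro rfl; exact hQ (skewMul_zero_left σ _)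
    rw [natDegree_skewMul_X_sub_C σ hQ₁] at hn
    obtain ⟨a, l, rfl⟩ := ih hQ₁ (by omega)
    exact ⟨a, l ++ [c], skewMul_C_mul_skewLinearFactors_X_sub_C σ a l c⟩

theorem CAlgClosed.exists_root_notMem (hσ : CAlgClosed σ Cardinal.aleph0) {Q : K[X]}
    (hQ : 1 < Q.natDegree) (hQ0 : Q.coeff 0 ≠ 0) {S : Set K} (hS : S.Finite) :
    ∃ c ∉ S, skewEval σ Q c = 0 := by
  have hroots : {c | skewEval σ Q c = 0}.Infinite :=
    Set.infinite_coe_iff.1 (Cardinal.infinite_iff.2 (hσ Q hQ hQ0))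
  obtain ⟨c, hc, hcS⟩ := hroots.exists_notMem_finite hS
  exact ⟨c, hcS, hc⟩

theorem exists_nodup_factorization_of_natDegree_eq_two (hσ : CAlgClosed σ Cardinal.aleph0)
    {Q : K[X]} (hQ : Q.natDegree = 2) (hQ0 : Q.coeff 0 ≠ 0) {S : Set K} (hS : S.Finite) :
    ∃ a l, l.Nodup ∧ (∀ t ∈ l, t ∉ S) ∧ Q = C a * skewLinearFactors σ l := by
  set κ := Q.coeff 0 / Q.leadingCoeff
  have hκ : κ ≠ 0 := div_ne_zero hQ0 (leadingCoeff_ne_zero.2 fun h => by simp [h] at hQ)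
  -- Peeling off a root `c` leaves a linear factor `T − d` with `d * c = κ`.
  have hbad : (S ∪ (κ / ·) ⁻¹' S ∪ {x | x * x = κ}).Finite := by
    refine (hS.union (hS.preimage fun x _ y _ h => ?_)).union ?_
    · simpa [div_eq_mul_inv, hκ] using h
    · classical
      refine (nthRoots 2 κ).toFinset.finite_toSet.subset fun x hx => ?_
      simpa [mem_nthRoots, sq] using hx
  obtain ⟨c, hc, hroot⟩ := hσ.exists_root_notMem (by omega) hQ0 hbad
  obtain ⟨Q₁, rfl⟩ := exists_eq_skewMul_X_sub_C σ hroot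
  have hQ₁ : Q₁ ≠ 0 := by rintro rfl; simp [skewMul_zero_left] at hQ
  have h₁ : Q₁.natDegree = 1 := by rw [natDegree_skewMul_X_sub_C σ hQ₁] at hQ; omega
  set d := -(Q₁.coeff 0 / Q₁.leadingCoeff)
  have hdc : d * c = κ := by
    have hl : Q₁.leadingCoeff ≠ 0 := leadingCoeff_ne_zero.2 hQ₁
    simp only [κ, d, coeff_zero_skewMul_X_sub_C, leadingCoeff_skewMul_X_sub_C σ hQ₁]
    field_simp
  have hc0 : c ≠ 0 := by
    rintro rfl
    simp_all [κ]
  have hdc' : d ≠ c := by rintro rfl; exact hc (Or.inr hdc)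
  have hdS : d ∉ S := fun h => hc (Or.inl (Or.inr (eq_div_of_mul_eq hc0 hdc ▸ h : κ / c ∈ S)))
  have hcS : c ∉ S := fun h => hc (Or.inl (Or.inl h))
  refine ⟨Q₁.leadingCoeff, [d, c], by simpa using hdc', by simp [hdS, hcS], ?_⟩
  conv_lhs => rw [eq_C_mul_skewLinearFactors_singleton (σ := σ) h₁]
  rw [skewMul_C_mul_skewLinearFactors_X_sub_C, List.singleton_append]

theorem exists_nodup_factorization_avoiding (hσ : CAlgClosed σ Cardinal.aleph0) {Q : K[X]}
    (hQ : 2 ≤ Q.natDegree) (hQ0 : Q.coeff 0 ≠ 0) {S : Set K} (hS : S.Finite) :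
    ∃ a l, l.Nodup ∧ (∀ t ∈ l, t ∉ S) ∧ Q = C a * skewLinearFactors σ l := by
  obtain ⟨n, hn⟩ := Nat.exists_eq_add_of_le' hQ
  induction n generalizing Q S with
  | zero => exact exists_nodup_factorization_of_natDegree_eq_two hσ hn hQ0 hS
  | succ n ih =>
    obtain ⟨c, hcS, hroot⟩ := hσ.exists_root_notMem (by omega) hQ0 hS
    obtain ⟨Q₁, rfl⟩ := exists_eq_skewMul_X_sub_C σ hroot
    have hQ₁ : Q₁ ≠ 0 := by rintro rfl; simp [skewMul_zero_left] at hQ0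
    rw [natDegree_skewMul_X_sub_C σ hQ₁] at hn
    rw [coeff_zero_skewMul_X_sub_C, neg_ne_zero] at hQ0
    obtain ⟨a, l, hl, hlS, rfl⟩ :=
      ih (by omega) (left_ne_zero_of_mul hQ0) (hS.insert c) (by omega)
    refine ⟨a, l ++ [c], ?_, ?_, skewMul_C_mul_skewLinearFactors_X_sub_C σ a l c⟩
    · exact hl.append (List.nodup_singleton c) fun t ht h => hlS t ht (by simp_all)
    · simp only [List.mem_append, List.mem_singleton]
      rintro t (ht | rfl)
      exacts [fun h => hlS t ht (Set.mem_insert_of_mem c h), hcS]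

theorem exists_nodup_factorization (hσ : CAlgClosed σ Cardinal.aleph0) {Q : K[X]}
    (hQ0 : Q.coeff 0 ≠ 0) : ∃ a l, l.Nodup ∧ Q = C a * skewLinearFactors σ l := by
  rcases lt_or_ge Q.natDegree 2 with hQ | hQ
  · interval_cases h : Q.natDegree
    · exact ⟨_, _, List.nodup_nil, eq_C_mul_skewLinearFactors_nil h⟩
    · exact ⟨_, _, List.nodup_singleton _, eq_C_mul_skewLinearFactors_singleton h⟩
  · obtain ⟨a, l, hl, -, hQ⟩ := exists_nodup_factorization_avoiding hσ hQ hQ0 Set.finite_empty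
    exact ⟨a, l, hl, hQ⟩

theorem ne_zero_of_coeff_zero_C_mul_skewLinearFactors_ne_zero {a : K} {l : List K}
    (h : (C a * skewLinearFactors σ l).coeff 0 ≠ 0) : a ≠ 0 ∧ ∀ t ∈ l, t ≠ 0 := by
  rw [coeff_C_mul, coeff_zero_skewLinearFactors] at h
  refine ⟨left_ne_zero_of_mul h, fun t ht ht0 => right_ne_zero_of_mul h ?_⟩
  exact List.prod_eq_zero (List.mem_map.2 ⟨t, ht, by rw [ht0, neg_zero]⟩)

end Factorization

/-- (a) Over a 1-algebraically closed σ-field every nonzero skew polynomial splits completely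
as `a·(T−aₙ)⋯(T−a₁)·Tᵐ` with `a, a₁, …, aₙ` nonzero; (b) over an ℵ₀-algebraically closed
σ-field the `aᵢ` can moreover be chosen distinct. -/
theorem stmt_15 {K : Type u} [Field K] (σ : K →+* K) :
    (OneAlgClosed σ → ∀ P : Polynomial K, P ≠ 0 →
      ∃ (n m : ℕ) (a : K) (r : Fin n → K), a ≠ 0 ∧ (∀ i, r i ≠ 0) ∧
        P = skewLinearProd σ a r m) ∧
    (CAlgClosed σ Cardinal.aleph0 → ∀ P : Polynomial K, P ≠ 0 →
      ∃ (n m : ℕ) (a : K) (r : Fin n → K), a ≠ 0 ∧ (∀ i, r i ≠ 0) ∧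
        Function.Injective r ∧ P = skewLinearProd σ a r m) := by
  refine ⟨fun hσ P hP => ?_, fun hσ P hP => ?_⟩
  · obtain ⟨m, Q, hQ0, rfl⟩ := exists_eq_mul_X_pow_of_ne_zero hP
    obtain ⟨a, l, rfl⟩ :=
      exists_eq_C_mul_skewLinearFactors hσ (Q := Q) fun hQ => hQ0 (by rw [hQ, coeff_zero])
    obtain ⟨ha, hl⟩ := ne_zero_of_coeff_zero_C_mul_skewLinearFactors_ne_zero hQ0
    exact ⟨l.length, m, a, l.get, ha, fun i => hl _ (l.get_mem i),
      by rw [skewLinearProd_eq, List.ofFn_get]⟩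
  · obtain ⟨m, Q, hQ0, rfl⟩ := exists_eq_mul_X_pow_of_ne_zero hP
    obtain ⟨a, l, hnodup, rfl⟩ := exists_nodup_factorization hσ hQ0
    obtain ⟨ha, hl⟩ := ne_zero_of_coeff_zero_C_mul_skewLinearFactors_ne_zero hQ0
    exact ⟨l.length, m, a, l.get, ha, fun i => hl _ (l.get_mem i),
      List.nodup_iff_injective_get.1 hnodup, by rw [skewLinearProd_eq, List.ofFn_get]⟩
end

section
/- Let c > 1 be a cardinal number. A σ-field (L, σ) is c-algebraically closed if and only if it is 1-algebraically closed and every skew polynomial P(T) ∈ L[T;σ] of degree 2 with nonzero constant term has at least c distinct right roots in L. -/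
open Polynomial

variable {K : Type*} [Field K]

lemma skewN_zero (σ : K →+* K) (b : K) : skewN σ 0 b = 1 := rfl
lemma skewN_succ (σ : K →+* K) (i : ℕ) (b : K) : skewN σ (i+1) b = σ (skewN σ i b) * b := rfl

lemma skewN_succ' (σ : K →+* K) (i : ℕ) (b : K) :
    skewN σ (i+1) b = (⇑σ)^[i] b * skewN σ i b := by
  induction i with
  | zero => simp [skewN]
  | succ i ih =>
    rw [skewN_succ σ (i+1), ih, map_mul, Function.iterate_succ_apply',
      mul_assoc, ← skewN_succ σ i, ih]

lemma skewN_add (σ : K →+* K) (i j : ℕ) (b : K) :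
    skewN σ (i + j) b = (⇑σ)^[i] (skewN σ j b) * skewN σ i b := by
  induction j with
  | zero => simp [skewN]
  | succ j ih =>
    have h1 : i + (j + 1) = (i + j) + 1 := rfl
    have e : ∀ x : K, σ ((⇑σ)^[i] x) = (⇑σ)^[i] (σ x) := fun x =>
      (Function.iterate_succ_apply' σ i x).symm.trans (Function.iterate_succ_apply σ i x)
    have h2 : σ (skewN σ i b) * b = (⇑σ)^[i] b * skewN σ i b :=
      (skewN_succ σ i b).symm.trans (skewN_succ' σ i b)
    rw [h1, skewN_succ, ih, map_mul, skewN_succ, iterate_map_mul, e, mul_assoc, h2,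
      ← mul_assoc]

lemma skewN_conj (σ : K →+* K) {s : K} (hs : s ≠ 0) (b : K) (i : ℕ) :
    skewN σ i (σ s * b * s⁻¹) = (⇑σ)^[i] s * skewN σ i b * s⁻¹ := by
  induction i with
  | zero => simp [skewN, mul_inv_cancel₀ hs]
  | succ i ih =>
    have hσs : σ s ≠ 0 := by
      simpa using (map_ne_zero σ).mpr hs
    rw [skewN_succ, ih, skewN_succ, Function.iterate_succ_apply']
    rw [map_mul, map_mul, map_inv₀]
    field_simp

lemma skewEval_eq_sum (σ : K →+* K) (P : Polynomial K) (b : K) :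
    skewEval σ P b = P.sum (fun i c => c * skewN σ i b) := rfl

noncomputable def skewEvalHom (σ : K →+* K) (b : K) : Polynomial K →+ K where
  toFun P := skewEval σ P b
  map_zero' := by simp [skewEval]
  map_add' P Q := by
    simp only [skewEval_eq_sum]
    exact Polynomial.sum_add_index P Q _ (fun i => zero_mul _) (fun i x y => add_mul x y _)

lemma skewEval_CXpow (σ : K →+* K) (c : K) (n : ℕ) (b : K) :
    skewEval σ (C c * X ^ n) b = c * skewN σ n b := by
  rw [skewEval_eq_sum, C_mul_X_pow_eq_monomial]
  exact Polynomial.sum_monomial_index c _ (zero_mul _)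

lemma skewEval_eq_range (σ : K →+* K) (P : Polynomial K) (b : K) {n : ℕ}
    (hn : P.natDegree < n) :
    skewEval σ P b = ∑ i ∈ Finset.range n, P.coeff i * skewN σ i b := by
  rw [skewEval]
  exact Finset.sum_subset (P.supp_subset_range hn)
    (fun i _ hi => by rw [Polynomial.notMem_support_iff.mp hi, zero_mul])

lemma skewEval_at_zero (σ : K →+* K) (P : Polynomial K) :
    skewEval σ P 0 = P.coeff 0 := by
  rw [skewEval_eq_range σ P 0 (lt_add_one _)]
  rw [Finset.sum_eq_single_of_mem 0 (Finset.mem_range.mpr (by omega))]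
  · simp [skewN]
  · intro i _ hi
    match i, hi with
    | j + 1, _ => simp [skewN]

lemma skewEval_X_sub_C (σ : K →+* K) (a b : K) :
    skewEval σ (X - C a) b = b - a := by
  rw [skewEval_eq_range σ (X - C a) b (n := 2) (by rw [natDegree_X_sub_C]; exact one_lt_two)]
  simp [Finset.sum_range_succ, skewN]
  ring

lemma skewEval_skewMul (σ : K →+* K) (P Q : Polynomial K) (b : K) :
    skewEval σ (skewMul σ P Q) b
      = ∑ i ∈ P.support, P.coeff i * (⇑σ)^[i] (skewEval σ Q b) * skewN σ i b := by
  have hhom : ∀ R : Polynomial K, skewEval σ R b = skewEvalHom σ b R := fun _ => rfl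
  rw [skewMul, hhom, map_sum]
  refine Finset.sum_congr rfl fun i _ => ?_
  rw [map_sum]
  simp only [← hhom, skewEval_CXpow]
  rw [skewEval, ← RingHom.coe_pow, map_sum, Finset.mul_sum, Finset.sum_mul]
  refine Finset.sum_congr rfl fun j _ => ?_
  rw [skewN_add, map_mul, RingHom.coe_pow]
  ring

lemma skewEval_skewMul_of_ne (σ : K →+* K) (P Q : Polynomial K) (b : K)
    (hs : skewEval σ Q b ≠ 0) :
    skewEval σ (skewMul σ P Q) b
      = skewEval σ P (σ (skewEval σ Q b) * b * (skewEval σ Q b)⁻¹) * skewEval σ Q b := by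
  rw [skewEval_skewMul]
  set s := skewEval σ Q b with hsdef
  rw [skewEval, Finset.sum_mul]
  refine Finset.sum_congr rfl fun i _ => ?_
  rw [skewN_conj σ hs]
  field_simp

lemma skewMul_eq_range (σ : K →+* K) (P Q : Polynomial K) {n m : ℕ}
    (hn : P.natDegree < n) (hm : Q.natDegree < m) :
    skewMul σ P Q = ∑ i ∈ Finset.range n, ∑ j ∈ Finset.range m,
      C (P.coeff i * (⇑σ)^[i] (Q.coeff j)) * X ^ (i + j) := by
  rw [skewMul]
  rw [Finset.sum_subset (P.supp_subset_range hn) (fun i _ hi => by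
    simp [Polynomial.notMem_support_iff.mp hi])]
  refine Finset.sum_congr rfl fun i _ => ?_
  exact Finset.sum_subset (Q.supp_subset_range hm) (fun j _ hj => by
    simp [Polynomial.notMem_support_iff.mp hj])

lemma skewMul_XsubC_coeff (σ : K →+* K) (Q : Polynomial K) (a : K) (k : ℕ) :
    (skewMul σ Q (X - C a)).coeff k
      = (if k = 0 then 0 else Q.coeff (k-1)) - Q.coeff k * (⇑σ)^[k] a := by
  rw [skewMul_eq_range σ Q (X - C a) (lt_add_one _)
    (by rw [natDegree_X_sub_C]; exact one_lt_two)]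
  rw [finset_sum_coeff]
  have expand : ∀ i : ℕ, (∑ j ∈ Finset.range 2,
      C (Q.coeff i * (⇑σ)^[i] ((X - C a).coeff j)) * X ^ (i + j)).coeff k
      = (if i = k then -(Q.coeff i * (⇑σ)^[i] a) else 0)
        + (if i + 1 = k then Q.coeff i else 0) := by
    intro i
    have h0 : (X - C a).coeff 0 = -a := by simp
    have h1 : (X - C a).coeff 1 = 1 := by simp
    rw [Finset.sum_range_succ, Finset.sum_range_one, h0, h1]
    simp only [coeff_add, coeff_C_mul, coeff_X_pow, iterate_map_neg, iterate_map_one, mul_one, mul_neg,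
      mul_ite, mul_zero, neg_zero, Nat.add_zero]
    simp [eq_comm]
  rw [Finset.sum_congr rfl fun i _ => expand i, Finset.sum_add_distrib]
  have hA : (∑ i ∈ Finset.range (Q.natDegree+1), if i = k then -(Q.coeff i * (⇑σ)^[i] a) else 0)
      = -(Q.coeff k * (⇑σ)^[k] a) := by
    rw [Finset.sum_ite_eq' (Finset.range (Q.natDegree + 1)) k fun i => -(Q.coeff i * (⇑σ)^[i] a)]
    split_ifs with h
    · rfl
    · rw [Polynomial.coeff_eq_zero_of_natDegree_lt (by simp at h; omega)]
      ring
  have hB : (∑ i ∈ Finset.range (Q.natDegree+1), if i + 1 = k then Q.coeff i else 0)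
      = if k = 0 then 0 else Q.coeff (k-1) := by
    cases k with
    | zero => simp
    | succ k' =>
      simp only [Nat.succ_ne_zero, if_false, add_left_inj]
      rw [Finset.sum_ite_eq' (Finset.range (Q.natDegree + 1)) k' Q.coeff]
      simp only [Nat.add_sub_cancel]
      split_ifs with h
      · rfl
      · exact (Polynomial.coeff_eq_zero_of_natDegree_lt (by simp at h; omega)).symm
  rw [hA, hB]
  ring

lemma exists_skew_factor (σ : K →+* K) (P : Polynomial K) (a : K)
    (hroot : skewEval σ P a = 0) :
    ∃ Q : Polynomial K, P = skewMul σ Q (X - C a) := by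
  classical
  set n := P.natDegree with hn
  set g : ℕ → K := fun j => ∑ i ∈ Finset.range (n+1),
    if j < i then P.coeff i * (⇑σ)^[j+1] (skewN σ (i - 1 - j) a) else 0 with hg
  have hgz : ∀ j, n ≤ j → g j = 0 := by
    intro j hj
    refine Finset.sum_eq_zero fun i hi => ?_
    rw [if_neg]
    have := Finset.mem_range.mp hi
    omega
  refine ⟨∑ j ∈ Finset.range n, C (g j) * X ^ j, ?_⟩
  have hQc : ∀ j, (∑ j ∈ Finset.range n, C (g j) * X ^ j).coeff j = g j := by
    intro j
    rw [finset_sum_coeff]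
    simp only [coeff_C_mul, coeff_X_pow, mul_ite, mul_one, mul_zero]
    rw [Finset.sum_ite_eq (Finset.range n) j g]
    split_ifs with h
    · rfl
    · exact (hgz j (by simpa using h)).symm
  have gdef : ∀ j, g j = ∑ i ∈ Finset.range (n+1),
      if j < i then P.coeff i * (⇑σ)^[j+1] (skewN σ (i - 1 - j) a) else 0 := fun j => rfl
  ext k
  rw [skewMul_XsubC_coeff, hQc, hQc]
  cases k with
  | zero =>
    simp only [if_true, Function.iterate_zero, id_eq]
    have hsum : (0:K) = ∑ i ∈ Finset.range (n+1), P.coeff i * skewN σ i a :=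
      hroot ▸ (skewEval_eq_range σ P a (lt_add_one n))
    have e1 : g 0 = ∑ i ∈ Finset.range n, P.coeff (i+1) * σ (skewN σ i a) := by
      rw [gdef 0, Finset.sum_range_succ']
      simp
    have e2 : ∑ i ∈ Finset.range (n+1), P.coeff i * skewN σ i a
        = (∑ i ∈ Finset.range n, P.coeff (i+1) * skewN σ (i+1) a) + P.coeff 0 := by
      rw [Finset.sum_range_succ']
      simp [skewN]
    rw [e1, Finset.sum_mul,
      Finset.sum_congr rfl fun i _ => show P.coeff (i+1) * σ (skewN σ i a) * a
        = P.coeff (i+1) * skewN σ (i+1) a by rw [skewN_succ]; ring]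
    rw [e2] at hsum
    linear_combination -hsum
  | succ k' =>
    simp only [Nat.succ_ne_zero, if_false, Nat.add_sub_cancel]
    have e3 : g (k'+1) * (⇑σ)^[k'+1] a = ∑ i ∈ Finset.range (n+1),
        (if k'+1 < i then P.coeff i * (⇑σ)^[k'+1] (skewN σ (i-1-k') a) else 0) := by
      rw [gdef (k'+1), Finset.sum_mul]
      refine Finset.sum_congr rfl fun i _ => ?_
      split_ifs with h
      · have hidx : i - 1 - k' = (i - 1 - (k'+1)) + 1 := by omega
        rw [hidx, skewN_succ, iterate_map_mul, ← Function.iterate_succ_apply]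
        ring
      · rw [zero_mul]
    rw [e3, gdef k', ← Finset.sum_sub_distrib]
    have e4 : ∀ i ∈ Finset.range (n+1),
        ((if k' < i then P.coeff i * (⇑σ)^[k'+1] (skewN σ (i - 1 - k') a) else 0)
          - (if k'+1 < i then P.coeff i * (⇑σ)^[k'+1] (skewN σ (i-1-k') a) else 0))
        = if i = k'+1 then P.coeff (k'+1) else 0 := by
      intro i _
      by_cases hik : i = k'+1
      · subst hik
        rw [if_pos (Nat.lt_succ_self k'), if_neg (lt_irrefl _), if_pos rfl]
        have h0 : k' + 1 - 1 - k' = 0 := by omega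
        rw [h0]
        simp [skewN]
      · rw [if_neg hik]
        by_cases h1 : k' < i
        · rw [if_pos h1, if_pos (by omega), sub_self]
        · rw [if_neg h1, if_neg (by omega), sub_zero]
    rw [Finset.sum_congr rfl e4,
      Finset.sum_ite_eq' (Finset.range (n+1)) (k'+1) (fun _ => P.coeff (k'+1))]
    split_ifs with h
    · rfl
    · exact coeff_eq_zero_of_natDegree_lt (p := P) (n := k'+1) (by simp at h; omega)

universe u

/-- For a cardinal `c > 1`, a σ-field `(L, σ)` is `c`-algebraically closed iff it is
1-algebraically closed and every skew polynomial of degree `2` with nonzero constant term has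
at least `c` distinct right roots. -/
theorem stmt_16 (c : Cardinal.{u}) (hc : 1 < c) (L : Type u) [Field L] (σ : L →+* L) :
    (∀ P : Polynomial L, 1 < P.natDegree → P.coeff 0 ≠ 0 →
      c ≤ Cardinal.mk {x : L // skewEval σ P x = 0}) ↔
    ((∀ P : Polynomial L, 0 < P.natDegree → ∃ a : L, skewEval σ P a = 0) ∧
      (∀ P : Polynomial L, P.natDegree = 2 → P.coeff 0 ≠ 0 →
        c ≤ Cardinal.mk {x : L // skewEval σ P x = 0})) := by
  constructor
  · intro H
    refine ⟨?_, fun P h2 h0 => H P (by omega) h0⟩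
    intro P hP
    by_cases h0 : P.coeff 0 = 0
    · exact ⟨0, by rw [skewEval_at_zero]; exact h0⟩
    by_cases hn1 : P.natDegree = 1
    · have hPne : P ≠ 0 := fun h => h0 (by simp [h])
      have hp1 : P.coeff 1 ≠ 0 := by
        rw [← hn1]
        exact mt Polynomial.leadingCoeff_eq_zero.mp hPne
      refine ⟨-P.coeff 0 / P.coeff 1, ?_⟩
      rw [skewEval_eq_range σ P _ (by omega : P.natDegree < 2)]
      rw [Finset.sum_range_succ, Finset.sum_range_one]
      simp only [skewN, map_one, one_mul]
      field_simp
      ring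
    · have h1 : 1 < P.natDegree := by omega
      have hcard := H P h1 h0
      have hpos : (0 : Cardinal) < Cardinal.mk {x : L // skewEval σ P x = 0} :=
        lt_of_lt_of_le (lt_trans zero_lt_one hc) hcard
      obtain ⟨x⟩ := Cardinal.mk_ne_zero_iff.mp (ne_of_gt hpos)
      exact ⟨x.1, x.2⟩
  · rintro ⟨H1, H2⟩ P hdeg h0
    by_cases h2 : P.natDegree = 2
    · exact H2 P h2 h0
    have h3 : 3 ≤ P.natDegree := by omega
    obtain ⟨a, ha⟩ := H1 P (by omega)
    have ha0 : a ≠ 0 := fun h => h0 (by rw [← skewEval_at_zero σ P]; exact h ▸ ha)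
    obtain ⟨Q, hQ⟩ := exists_skew_factor σ P a ha
    have hcoeff : ∀ k, P.coeff k
        = (if k = 0 then 0 else Q.coeff (k-1)) - Q.coeff k * (⇑σ)^[k] a := fun k => by
      rw [hQ, skewMul_XsubC_coeff]
    have hQ0 : Q.coeff 0 ≠ 0 := by
      intro h
      have := hcoeff 0
      rw [if_pos rfl, h, zero_mul, sub_zero] at this
      exact h0 this
    have hPne : P ≠ 0 := fun h => h0 (by simp [h])
    have hQdeg : 0 < Q.natDegree := by
      by_contra hcon
      push_neg at hcon
      have hQn : Q.natDegree = 0 := by omega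
      have hk := hcoeff P.natDegree
      rw [if_neg (by omega), coeff_eq_zero_of_natDegree_lt (p := Q) (by omega),
        coeff_eq_zero_of_natDegree_lt (p := Q) (by omega), zero_mul, sub_zero] at hk
      exact mt Polynomial.leadingCoeff_eq_zero.mp hPne hk
    obtain ⟨y, hy⟩ := H1 Q hQdeg
    have hy0 : y ≠ 0 := fun h => hQ0 (by rw [← skewEval_at_zero σ Q]; exact h ▸ hy)
    set R : Polynomial L := X^2 - C (σ a + y) * X + C (y * a) with hR
    have hRdeg : R.natDegree = 2 := by
      rw [hR]
      compute_degree!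
    have hR0 : R.coeff 0 ≠ 0 := by
      have hc0 : R.coeff 0 = y * a := by rw [hR]; simp
      rw [hc0]
      exact mul_ne_zero hy0 ha0
    have key : ∀ b : L, skewEval σ R b = 0 → skewEval σ P b = 0 := by
      intro b hb
      have hRb : σ b * b - (σ a + y) * b + y * a = 0 := by
        rw [skewEval_eq_range σ R b (by omega : R.natDegree < 3)] at hb
        rw [Finset.sum_range_succ, Finset.sum_range_succ, Finset.sum_range_one] at hb
        have c0 : R.coeff 0 = y * a := by rw [hR]; simp
        have c1 : R.coeff 1 = -(σ a + y) := by rw [hR]; simp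
        have c2 : R.coeff 2 = 1 := by rw [hR]; simp [coeff_X_pow]
        rw [c0, c1, c2] at hb
        simp only [skewN, map_one, one_mul, mul_one] at hb
        linear_combination hb
      by_cases hba : b = a
      · rw [hba]; exact ha
      · have hs : b - a ≠ 0 := sub_ne_zero.mpr hba
        have hyconj : σ (b - a) * b * (b - a)⁻¹ = y := by
          rw [map_sub]
          field_simp
          linear_combination hRb
        rw [hQ, skewEval_skewMul_of_ne σ Q _ b (by rw [skewEval_X_sub_C]; exact hs),
          skewEval_X_sub_C, hyconj, hy, zero_mul]
    calc c ≤ Cardinal.mk {x : L // skewEval σ R x = 0} := H2 R hRdeg hR0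
      _ ≤ Cardinal.mk {x : L // skewEval σ P x = 0} :=
        Cardinal.mk_le_of_injective (f := fun x => ⟨x.1, key x.1 x.2⟩)
          (fun x y h => by
            apply Subtype.ext
            simpa [Subtype.ext_iff] using h)
end

section
/- Let (K, σ) be a σ-field with σ ≠ id_K. If (K, σ) is 1-algebraically closed, then σ has infinite order, i.e., σ^n ≠ id_K for every natural number n ≥ 1. -/
open Polynomial

variable {K : Type*} [Field K]

lemma skewN_eq_prod (σ : K →+* K) (n : ℕ) (a : K) :
    skewN σ n a = ∏ i ∈ Finset.range n, (⇑σ)^[i] a := by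
  induction n with
  | zero => simp [skewN]
  | succ n ih =>
      rw [show skewN σ (n+1) a = σ (skewN σ n a) * a from rfl, ih, map_prod,
        Finset.prod_range_succ']
      simp [Function.iterate_succ_apply']

lemma skewEval_eq_sum_range (σ : K →+* K) (P : Polynomial K) (a : K) :
    skewEval σ P a = ∑ i ∈ Finset.range (P.natDegree + 1), P.coeff i * skewN σ i a := by
  unfold skewEval
  apply Finset.sum_subset
  · intro i hi
    simp only [Finset.mem_range]
    exact Nat.lt_succ_of_le (Polynomial.le_natDegree_of_mem_supp i hi)
  · intro i _ hi
    simp [Polynomial.notMem_support_iff.mp hi]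

/-- If `σ ≠ id` and `(K, σ)` is 1-algebraically closed (every nonconstant skew polynomial has
a right root), then `σ` has infinite order: no positive iterate of `σ` is the identity. -/
theorem stmt_19 {K : Type*} [Field K] (σ : K →+* K) (hσ : (⇑σ : K → K) ≠ id)
    (hac : ∀ P : Polynomial K, 0 < P.natDegree → ∃ a : K, skewEval σ P a = 0) :
    ∀ n : ℕ, 1 ≤ n → (⇑σ : K → K)^[n] ≠ id := by
  intro n hn hid
  obtain ⟨d, hd⟩ : ∃ d, σ d ≠ d := by
    by_contra h
    push_neg at h
    exact hσ (funext h)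
  have hdeg : (X ^ n - C d).natDegree = n := Polynomial.natDegree_X_pow_sub_C
  obtain ⟨c, hc⟩ := hac (X ^ n - C d) (by rw [hdeg]; omega)
  rw [skewEval_eq_sum_range, hdeg] at hc
  have hc' : skewN σ n c - d = 0 := by
    rw [← hc]
    rw [Finset.sum_congr rfl (fun i _ => by
      rw [Polynomial.coeff_sub, Polynomial.coeff_X_pow, Polynomial.coeff_C, sub_mul])]
    rw [Finset.sum_sub_distrib]
    congr 1
    · rw [Finset.sum_eq_single n]
      · simp
      · intro i _ hne; simp [hne]
      · intro h; simp at h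
    · rw [Finset.sum_eq_single 0]
      · simp [skewN]
      · intro i _ hne; simp [hne]
      · intro h; exact absurd (Finset.mem_range.mpr (Nat.succ_pos n)) h
  have hdn : d = skewN σ n c := (sub_eq_zero.mp hc').symm
  have hc0 : c ≠ 0 := by
    rintro rfl
    have : skewN σ n (0:K) = 0 := by
      rw [skewN_eq_prod]
      apply Finset.prod_eq_zero (Finset.mem_range.mpr (by omega : 0 < n))
      simp
    rw [this] at hdn
    subst hdn
    simp at hd
  have h1 : σ (skewN σ n c) * c = skewN σ n c * c := by
    have e1 : σ (skewN σ n c) * c = skewN σ (n+1) c := rfl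
    rw [e1, skewN_eq_prod, Finset.prod_range_succ, ← skewN_eq_prod,
      show (⇑σ)^[n] c = c from by rw [hid]; rfl]
  exact hd (by rw [hdn]; exact mul_right_cancel₀ hc0 h1)
end
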